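/- Let K₁ and K₂ be fields and let a₁ ∈ K₁ ∖ {0,1}, a₂ ∈ K₂ ∖ {0,1} be such that both hexagons H(a₁) and H(a₂) have exactly three elements. Then the 9-element set H(a₁) × H(a₂) ⊆ K₁ × K₂ is the disjoint union of exactly two product hexagons: there exist pairs b, c ∈ H(a₁) × H(a₂) such that H₂(b) has exactly 3 elements, H₂(c) has exactly 6 elements, H₂(b) ∩ H₂(c) = ∅, and H₂(b) ∪ H₂(c) = H(a₁) × H(a₂). -/
import Mathlib


/-- The hexagon of an element `a` of a field `K`: the orbit of `a` under the
anharmonic group action generated by `a ↦ 1 - a` and `a ↦ a⁻¹`. -/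
def hexagon {K : Type*} [Field K] (a : K) : Set K :=
  {a, 1 - a, a⁻¹, (1 - a)⁻¹, (a - 1) * a⁻¹, a * (a - 1)⁻¹}

/-- The product hexagon of `(a, b) ∈ K₁ × K₂`: the diagonal orbit of `(a, b)` under
the six anharmonic transformations applied simultaneously to both coordinates. -/
def hexagon2 {K₁ K₂ : Type*} [Field K₁] [Field K₂] (a : K₁) (b : K₂) : Set (K₁ × K₂) :=
  {(a, b), (1 - a, 1 - b), (a⁻¹, b⁻¹), ((1 - a)⁻¹, (1 - b)⁻¹),
   ((a - 1) * a⁻¹, (b - 1) * b⁻¹), (a * (a - 1)⁻¹, b * (b - 1)⁻¹)}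

lemma hexagon_of_q {K : Type*} [Field K] (a : K) (h0 : a ≠ 0) (h1 : a ≠ 1)
    (hq : a^2 - a + 1 = 0) : hexagon a = {a, 1 - a} := by
  have h1' : a - 1 ≠ 0 := sub_ne_zero.mpr h1
  have hinv : a⁻¹ = 1 - a := by
    field_simp
    linear_combination hq
  have hinv2 : (1 - a)⁻¹ = a := by
    rw [← hinv, inv_inv]
  have e5 : (a - 1) * a⁻¹ = a := by
    field_simp
    linear_combination -hq
  have e6 : a * (a - 1)⁻¹ = 1 - a := by
    field_simp
    linear_combination hq
  rw [hexagon, e5, e6, hinv, hinv2]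
  ext x; simp

lemma hexagon_ncard_six {K : Type*} [Field K] (a : K) (h0 : a ≠ 0) (h1 : a ≠ 1)
    (h2 : a ≠ 2) (hm1 : a ≠ -1) (hh : 2 * a ≠ 1) (hq : a ^ 2 - a + 1 ≠ 0) :
    (hexagon a).ncard = 6 := by
  have h1' : a - 1 ≠ 0 := sub_ne_zero.mpr h1
  have h1'' : 1 - a ≠ 0 := sub_ne_zero.mpr (Ne.symm h1)
  have d12 : a ≠ 1 - a := fun h => hh (by linear_combination h)
  have d13 : a ≠ a⁻¹ := by
    intro h; field_simp at h
    rcases mul_eq_zero.mp (show (a - 1) * (a + 1) = 0 by linear_combination h) with h' | h'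
    · exact h1 (by linear_combination h')
    · exact hm1 (by linear_combination h')
  have d14 : a ≠ (1 - a)⁻¹ := by
    intro h; field_simp at h
    exact hq (by linear_combination -h)
  have d15 : a ≠ (a - 1) * a⁻¹ := by
    intro h; field_simp at h
    exact hq (by linear_combination h)
  have d16 : a ≠ a * (a - 1)⁻¹ := by
    intro h; field_simp at h
    exact h2 (by linear_combination h)
  have d23 : 1 - a ≠ a⁻¹ := by
    intro h; field_simp at h
    exact hq (by linear_combination -h)
  have d24 : 1 - a ≠ (1 - a)⁻¹ := by
    intro h; field_simp at h
    rcases mul_eq_zero.mp (show a * (a - 2) = 0 by linear_combination h) with h' | h'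
    · exact h0 h'
    · exact h2 (by linear_combination h')
  have d25 : 1 - a ≠ (a - 1) * a⁻¹ := by
    intro h; field_simp at h
    rcases mul_eq_zero.mp (show (a - 1) * (a + 1) = 0 by linear_combination -h) with h' | h'
    · exact h1 (by linear_combination h')
    · exact hm1 (by linear_combination h')
  have d26 : 1 - a ≠ a * (a - 1)⁻¹ := by
    intro h; field_simp at h
    exact hq (by linear_combination -h)
  have d34 : a⁻¹ ≠ (1 - a)⁻¹ := by
    intro h
    rw [inv_eq_iff_eq_inv, inv_inv] at h
    exact hh (by linear_combination h)
  have d35 : a⁻¹ ≠ (a - 1) * a⁻¹ := by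
    intro h; field_simp at h
    exact h2 (by linear_combination -h)
  have d36 : a⁻¹ ≠ a * (a - 1)⁻¹ := by
    intro h; field_simp at h
    exact hq (by linear_combination -h)
  have d45 : (1 - a)⁻¹ ≠ (a - 1) * a⁻¹ := by
    intro h; field_simp at h
    exact hq (by linear_combination h)
  have d46 : (1 - a)⁻¹ ≠ a * (a - 1)⁻¹ := by
    intro h; field_simp at h
    rcases mul_eq_zero.mp (show (a - 1) * (a + 1) = 0 by linear_combination h) with h' | h'
    · exact h1 (by linear_combination h')
    · exact hm1 (by linear_combination h')
  have d56 : (a - 1) * a⁻¹ ≠ a * (a - 1)⁻¹ := by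
    intro h; field_simp at h
    exact hh (by linear_combination -h)
  rw [hexagon]
  rw [Set.ncard_insert_of_notMem (by simp [d12, d13, d14, d15, d16]),
      Set.ncard_insert_of_notMem (by simp [d23, d24, d25, d26]),
      Set.ncard_insert_of_notMem (by simp [d34, d35, d36]),
      Set.ncard_insert_of_notMem (by simp [d45, d46]),
      Set.ncard_insert_of_notMem (by simp [d56]),
      Set.ncard_singleton]

lemma hexagon_dyadic {K : Type*} [Field K] (a : K) (h0 : a ≠ 0) (h1 : a ≠ 1)
    (hc : (hexagon a).ncard = 3) :
    hexagon a = {2, -1, 2⁻¹} ∧ (2 : K) ≠ 0 ∧ (3 : K) ≠ 0 := by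
  have hq : a ^ 2 - a + 1 ≠ 0 := by
    intro hq
    have hle : (hexagon a).ncard ≤ 2 := by
      rw [hexagon_of_q a h0 h1 hq]
      exact (Set.ncard_insert_le _ _).trans (by simp)
    omega
  have hcase : a = 2 ∨ a = -1 ∨ 2 * a = 1 := by
    by_contra hno
    push_neg at hno
    have := hexagon_ncard_six a h0 h1 hno.1 hno.2.1 hno.2.2 hq
    omega
  have heq : hexagon a = {2, -1, 2⁻¹} := by
    rcases hcase with rfl | rfl | hhalf
    · rw [hexagon, show ((2:K) - 1) * 2⁻¹ = 2⁻¹ by norm_num,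
        show (2:K) * ((2:K) - 1)⁻¹ = 2 by norm_num,
        show (1 - (2:K)) = -1 by norm_num, show ((-1:K))⁻¹ = -1 by norm_num]
      ext x; simp; try tauto
    · rw [hexagon, show ((-1:K) - 1) * (-1:K)⁻¹ = 2 by norm_num,
        show (-1:K) * ((-1:K) - 1)⁻¹ = 2⁻¹ by
          rw [show ((-1:K) - 1) = -2 by norm_num, inv_neg]; ring,
        show (1 - (-1:K)) = 2 by norm_num, show ((-1:K))⁻¹ = -1 by norm_num]
      ext x; simp; try tauto
    · have h2 : (2 : K) ≠ 0 := left_ne_zero_of_mul_eq_one hhalf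
      have ha : a = 2⁻¹ := eq_inv_of_mul_eq_one_right (by linear_combination hhalf)
      have em : a - 1 = -a := by linear_combination hhalf
      have e2 : 1 - a = a := by linear_combination -hhalf
      have e3 : a⁻¹ = 2 := inv_eq_of_mul_eq_one_right (by linear_combination hhalf)
      have e5 : (a - 1) * a⁻¹ = -1 := by rw [em, neg_mul, mul_inv_cancel₀ h0]
      have e6 : a * (a - 1)⁻¹ = -1 := by
        rw [em, inv_neg, mul_neg, mul_inv_cancel₀ h0]
      rw [hexagon, e5, e6, e2, e3, ha]
      ext x; simp; try tauto
  refine ⟨heq, ?_, ?_⟩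
  · intro h2
    have : hexagon a = {2, -1} := by
      rw [heq, show ((2 : K))⁻¹ = 2 by rw [h2]; simp]
      ext x; simp; try tauto
    have : (hexagon a).ncard ≤ 2 := by
      rw [this]; exact (Set.ncard_insert_le _ _).trans (by simp)
    omega
  · intro h3
    have hm : (-1 : K) = 2 := by linear_combination -h3
    have : hexagon a = {2, 2⁻¹} := by
      rw [heq, hm]; ext x; simp; try tauto
    have : (hexagon a).ncard ≤ 2 := by
      rw [this]; exact (Set.ncard_insert_le _ _).trans (by simp)
    omega

/-- If `H(a₁)` and `H(a₂)` are hexagons of dyadic type (three elements each), then the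
nine-element set `H(a₁) × H(a₂)` is the disjoint union of a product hexagon with three
elements and a product hexagon with six elements. -/
theorem prod_of_dyadic_hexagons {K₁ K₂ : Type*} [Field K₁] [Field K₂] (a₁ : K₁) (a₂ : K₂)
    (ha₁0 : a₁ ≠ 0) (ha₁1 : a₁ ≠ 1) (ha₂0 : a₂ ≠ 0) (ha₂1 : a₂ ≠ 1)
    (hc₁ : (hexagon a₁).ncard = 3) (hc₂ : (hexagon a₂).ncard = 3) :
    ∃ b c : K₁ × K₂, b ∈ (hexagon a₁) ×ˢ (hexagon a₂) ∧ c ∈ (hexagon a₁) ×ˢ (hexagon a₂) ∧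
      (hexagon2 b.1 b.2).ncard = 3 ∧ (hexagon2 c.1 c.2).ncard = 6 ∧
      hexagon2 b.1 b.2 ∩ hexagon2 c.1 c.2 = ∅ ∧
      hexagon2 b.1 b.2 ∪ hexagon2 c.1 c.2 = (hexagon a₁) ×ˢ (hexagon a₂) := by
  obtain ⟨hexA, p2, p3⟩ := hexagon_dyadic a₁ ha₁0 ha₁1 hc₁
  obtain ⟨hexB, q2, q3⟩ := hexagon_dyadic a₂ ha₂0 ha₂1 hc₂
  have n21 : (2 : K₁) ≠ -1 := fun h => p3 (by linear_combination h)
  have n2i : (2 : K₁) ≠ 2⁻¹ := by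
    intro h; field_simp at h; exact p3 (by linear_combination h)
  have n1i : (-1 : K₁) ≠ 2⁻¹ := by
    intro h; field_simp at h; exact p3 (by linear_combination -h)
  have m21 : (2 : K₂) ≠ -1 := fun h => q3 (by linear_combination h)
  have m2i : (2 : K₂) ≠ 2⁻¹ := by
    intro h; field_simp at h; exact q3 (by linear_combination h)
  have m1i : (-1 : K₂) ≠ 2⁻¹ := by
    intro h; field_simp at h; exact q3 (by linear_combination -h)
  -- the two product hexagons
  have hb : hexagon2 (2 : K₁) (2 : K₂) =
      {((2 : K₁), (2 : K₂)), (-1, -1), (2⁻¹, 2⁻¹)} := by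
    rw [hexagon2, show ((2:K₁) - 1) * 2⁻¹ = 2⁻¹ by norm_num,
      show (2:K₁) * ((2:K₁) - 1)⁻¹ = 2 by norm_num,
      show (1 - (2:K₁)) = -1 by norm_num, show ((-1:K₁))⁻¹ = -1 by norm_num,
      show ((2:K₂) - 1) * 2⁻¹ = 2⁻¹ by norm_num,
      show (2:K₂) * ((2:K₂) - 1)⁻¹ = 2 by norm_num,
      show (1 - (2:K₂)) = -1 by norm_num, show ((-1:K₂))⁻¹ = -1 by norm_num]
    ext p; simp; try tauto
  have hcx : hexagon2 (2 : K₁) (-1 : K₂) =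
      {((2 : K₁), (-1 : K₂)), (-1, 2), (2⁻¹, -1), (-1, 2⁻¹), (2⁻¹, 2), (2, 2⁻¹)} := by
    rw [hexagon2, show ((2:K₁) - 1) * 2⁻¹ = 2⁻¹ by norm_num,
      show (2:K₁) * ((2:K₁) - 1)⁻¹ = 2 by norm_num,
      show (1 - (2:K₁)) = -1 by norm_num, show ((-1:K₁))⁻¹ = -1 by norm_num,
      show ((-1:K₂) - 1) * (-1:K₂)⁻¹ = 2 by norm_num,
      show (-1:K₂) * ((-1:K₂) - 1)⁻¹ = 2⁻¹ by
        rw [show ((-1:K₂) - 1) = -2 by norm_num, inv_neg]; ring,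
      show (1 - (-1:K₂)) = 2 by norm_num, show ((-1:K₂))⁻¹ = -1 by norm_num]
  refine ⟨(2, 2), (2, -1), ?_, ?_, ?_, ?_, ?_, ?_⟩
  · simp [hexA, hexB]
  · simp [hexA, hexB]
  · rw [hb]
    rw [Set.ncard_insert_of_notMem (by
          simp [Prod.ext_iff, n21, n2i, n1i, Ne.symm n21, Ne.symm n2i, Ne.symm n1i,
            m21, m2i, m1i, Ne.symm m21, Ne.symm m2i, Ne.symm m1i]),
        Set.ncard_insert_of_notMem (by
          simp [Prod.ext_iff, n21, n2i, n1i, Ne.symm n21, Ne.symm n2i, Ne.symm n1i,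
            m21, m2i, m1i, Ne.symm m21, Ne.symm m2i, Ne.symm m1i]),
        Set.ncard_singleton]
  · rw [hcx]
    rw [Set.ncard_insert_of_notMem (by
          simp [Prod.ext_iff, n21, n2i, n1i, Ne.symm n21, Ne.symm n2i, Ne.symm n1i,
            m21, m2i, m1i, Ne.symm m21, Ne.symm m2i, Ne.symm m1i]),
        Set.ncard_insert_of_notMem (by
          simp [Prod.ext_iff, n21, n2i, n1i, Ne.symm n21, Ne.symm n2i, Ne.symm n1i,
            m21, m2i, m1i, Ne.symm m21, Ne.symm m2i, Ne.symm m1i]),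
        Set.ncard_insert_of_notMem (by
          simp [Prod.ext_iff, n21, n2i, n1i, Ne.symm n21, Ne.symm n2i, Ne.symm n1i,
            m21, m2i, m1i, Ne.symm m21, Ne.symm m2i, Ne.symm m1i]),
        Set.ncard_insert_of_notMem (by
          simp [Prod.ext_iff, n21, n2i, n1i, Ne.symm n21, Ne.symm n2i, Ne.symm n1i,
            m21, m2i, m1i, Ne.symm m21, Ne.symm m2i, Ne.symm m1i]),
        Set.ncard_insert_of_notMem (by
          simp [Prod.ext_iff, n21, n2i, n1i, Ne.symm n21, Ne.symm n2i, Ne.symm n1i,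
            m21, m2i, m1i, Ne.symm m21, Ne.symm m2i, Ne.symm m1i]),
        Set.ncard_singleton]
  · have n12 := Ne.symm n21
    have ni2 := Ne.symm n2i
    have ni1 := Ne.symm n1i
    have m12 := Ne.symm m21
    have mi2 := Ne.symm m2i
    have mi1 := Ne.symm m1i
    rw [hb, hcx, Set.eq_empty_iff_forall_notMem]
    rintro ⟨x, y⟩ ⟨h1, h2⟩
    simp only [Set.mem_insert_iff, Set.mem_singleton_iff, Prod.mk.injEq] at h1 h2
    rcases h1 with ⟨rfl, rfl⟩ | ⟨rfl, rfl⟩ | ⟨rfl, rfl⟩ <;>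
      rcases h2 with ⟨h2a, h2b⟩ | ⟨h2a, h2b⟩ | ⟨h2a, h2b⟩ | ⟨h2a, h2b⟩ | ⟨h2a, h2b⟩ | ⟨h2a, h2b⟩ <;>
      tauto
  · rw [hb, hcx, hexA, hexB]
    ext ⟨x, y⟩
    simp only [Set.mem_union, Set.mem_insert_iff, Set.mem_singleton_iff, Prod.mk.injEq,
      Set.mem_prod]
    constructor
    · rintro ((⟨rfl,rfl⟩|⟨rfl,rfl⟩|⟨rfl,rfl⟩)|(⟨rfl,rfl⟩|⟨rfl,rfl⟩|⟨rfl,rfl⟩|⟨rfl,rfl⟩|⟨rfl,rfl⟩|⟨rfl,rfl⟩)) <;> simp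
    · rintro ⟨(rfl|rfl|rfl), (rfl|rfl|rfl)⟩ <;> simp
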